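/- arXiv:2112.02900 — 2 statements merged into one kernel-verified Lean document; each statement's English description precedes it below -/
import Mathlib

section
/- Ping-pong for Schottky subgroups of PGL(3,ℝ) acting on the flag space (Proposition 3.6 / Corollary 3.9(1)): Let g₁,…,g_d ∈ GL(3,ℝ) be loxodromic elements and let H₁⁻,H₁⁺,…,H_d⁻,H_d⁺ be 2d pairwise disjoint nonempty compact subsets of the flag space X, each equal to the closure of its interior, such that for every i one has B⁻(g_i) ⊆ int(H_i⁻), B⁺(g_i) ⊆ int(H_i⁺), and H_i⁺ = X \ int(g_i·H_i⁻). Let Γ be the subgroup of the homeomorphism group of X generated by the actions of g₁,…,g_d, let U = X \ ⋃_{i=1}^d (H_i⁻ ∪ H_i⁺) and Ω = ⋃_{γ ∈ Γ} γ(closure of U). Then: (1) the group homomorphism from the free group on d generators to the homeomorphism group of X sending the i-th generator to the action of g_i is injective (so Γ is freely generated by g₁,…,g_d); (2) Ω is an open Γ-invariant subset of X; (3) Γ acts freely on Ω (if γ·x = x for some x ∈ Ω then γ = id) and properly discontinuously on Ω (for every compact K ⊆ Ω, the set of γ ∈ Γ with γ·K ∩ K ≠ ∅ is finite); moreover the action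 is cocompact, since the compact set closure(U) satisfies ⋃_{γ∈Γ} γ(closure U) = Ω. -/
open Matrix Filter Topology Set

noncomputable section

/-- `V3` is `ℝ³`. -/
abbrev V3 : Type := Fin 3 → ℝ

/-- The group `GL(3,ℝ)` of invertible `3 × 3` real matrices. -/
abbrev GL3 : Type := (Matrix (Fin 3) (Fin 3) ℝ)ˣ

/-- Nonzero vectors of `ℝ³` up to a nonzero scalar. -/
def projSetoid : Setoid {v : V3 // v ≠ 0} where
  r v w := ∃ c : ℝ, c ≠ 0 ∧ w.1 = c • v.1
  iseqv := by
    refine ⟨fun v => ⟨1, one_ne_zero, (one_smul ℝ v.1).symm⟩, ?_, ?_⟩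
    · rintro v w ⟨c, hc, h⟩
      exact ⟨c⁻¹, inv_ne_zero hc, by rw [h, smul_smul, inv_mul_cancel₀ hc, one_smul]⟩
    · rintro u v w ⟨c, hc, h⟩ ⟨d, hd, h'⟩
      exact ⟨d * c, mul_ne_zero hd hc, by rw [h', h, smul_smul]⟩

/-- The real projective plane `ℝP²`, as the quotient of `ℝ³ \ {0}` by nonzero scalings,
with the quotient topology.  (We use the same model for the dual projective plane `ℝP²*`,
a class `[f₁ : f₂ : f₃]*` of linear forms being recorded through its coefficient
vector `(f₁, f₂, f₃)`; the form acts on vectors by the dot product.) -/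
def RP2 : Type := Quotient projSetoid

/-- The projective class `[v]` of a nonzero vector. -/
def RP2.mk (v : V3) (hv : v ≠ 0) : RP2 := Quotient.mk projSetoid ⟨v, hv⟩

instance : TopologicalSpace RP2 :=
  inferInstanceAs (TopologicalSpace (Quotient projSetoid))

lemma RP2.ind {P : RP2 → Prop} (h : ∀ (v : V3) (hv : v ≠ 0), P (RP2.mk v hv)) (p : RP2) : P p := by
  refine Quotient.ind (fun a => ?_) p
  exact h a.1 a.2

lemma RP2.mk_eq_mk_iff {v w : V3} {hv : v ≠ 0} {hw : w ≠ 0} :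
    RP2.mk v hv = RP2.mk w hw ↔ ∃ c : ℝ, c ≠ 0 ∧ w = c • v :=
  ⟨fun h => Quotient.exact h, fun h => Quotient.sound h⟩

lemma ne_zero_of_coord {v : V3} (i : Fin 3) (h : v i ≠ 0) : v ≠ 0 :=
  fun h0 => h (by rw [h0]; rfl)

/-- The projective class of a vector, defaulting to `[e₁]` for the zero vector. -/
def RP2.mk' (v : V3) : RP2 :=
  if h : v = 0 then RP2.mk ![1, 0, 0] (ne_zero_of_coord 0 (by simp)) else RP2.mk v h

lemma e1_ne : (![1, 0, 0] : V3) ≠ 0 := ne_zero_of_coord 0 (by norm_num)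

lemma e3_ne : (![0, 0, 1] : V3) ≠ 0 := ne_zero_of_coord 2 (by simp)

lemma GL3.mulVec_ne {g : GL3} {v : V3} (hv : v ≠ 0) :
    (g : Matrix (Fin 3) (Fin 3) ℝ) *ᵥ v ≠ 0 := by
  intro h
  apply hv
  have h2 : ((g⁻¹ : GL3) : Matrix (Fin 3) (Fin 3) ℝ) *ᵥ
      ((g : Matrix (Fin 3) (Fin 3) ℝ) *ᵥ v) = 0 := by rw [h, Matrix.mulVec_zero]
  rwa [Matrix.mulVec_mulVec, Units.inv_mul, Matrix.one_mulVec] at h2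

/-- The action of `g ∈ GL(3,ℝ)` on `ℝP²`, `g · [v] = [g v]`. -/
def RP2.mapMat (g : GL3) : RP2 → RP2 :=
  Quotient.lift
    (fun a : {v : V3 // v ≠ 0} =>
      RP2.mk ((g : Matrix (Fin 3) (Fin 3) ℝ) *ᵥ a.1) (GL3.mulVec_ne a.2))
    (by
      rintro a b ⟨c, hc, h⟩
      apply Quotient.sound
      refine ⟨c, hc, ?_⟩
      show (g : Matrix (Fin 3) (Fin 3) ℝ) *ᵥ b.1 = c • ((g : Matrix (Fin 3) (Fin 3) ℝ) *ᵥ a.1)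
      rw [h, Matrix.mulVec_smul])

lemma RP2.mapMat_mk (g : GL3) (v : V3) (hv : v ≠ 0) :
    RP2.mapMat g (RP2.mk v hv) =
      RP2.mk ((g : Matrix (Fin 3) (Fin 3) ℝ) *ᵥ v) (GL3.mulVec_ne hv) := rfl

/-- The element of `GL(3,ℝ)` acting on coefficient vectors of linear forms the way `g`
acts on `ℝP²*`:  the coefficient vector of `f ∘ g⁻¹` is `(g⁻¹)ᵀ` applied to that of `f`. -/
def dualGL (g : GL3) : GL3 where
  val := ((g⁻¹ : GL3) : Matrix (Fin 3) (Fin 3) ℝ)ᵀ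
  inv := ((g : GL3) : Matrix (Fin 3) (Fin 3) ℝ)ᵀ
  val_inv := by rw [← Matrix.transpose_mul, Units.mul_inv, Matrix.transpose_one]
  inv_val := by rw [← Matrix.transpose_mul, Units.inv_mul, Matrix.transpose_one]

/-- The flag space `X`: pairs `([v], [f]) ∈ ℝP² × ℝP²*` with `f(v) = 0`. -/
def FlagSpace : Set (RP2 × RP2) :=
  {x | ∀ (v f : V3) (hv : v ≠ 0) (hf : f ≠ 0),
    x.1 = RP2.mk v hv → x.2 = RP2.mk f hf → f ⬝ᵥ v = 0}

/-- Points of the flag space. -/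
abbrev Flag3 : Type := ↥FlagSpace

lemma mem_flagSpace_mk {v f : V3} (hv : v ≠ 0) (hf : f ≠ 0) (h : f ⬝ᵥ v = 0) :
    (RP2.mk v hv, RP2.mk f hf) ∈ FlagSpace := by
  rintro v' f' hv' hf' hp hq
  obtain ⟨c, hc, hcv⟩ := RP2.mk_eq_mk_iff.1 hp
  obtain ⟨d, hd, hdf⟩ := RP2.mk_eq_mk_iff.1 hq
  rw [hcv, hdf, smul_dotProduct, dotProduct_smul, h]
  simp

lemma dot_invariance (g : GL3) (v f : V3) :
    (((dualGL g : GL3) : Matrix (Fin 3) (Fin 3) ℝ) *ᵥ f) ⬝ᵥ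
      ((g : Matrix (Fin 3) (Fin 3) ℝ) *ᵥ v) = f ⬝ᵥ v := by
  have h1 : ((dualGL g : GL3) : Matrix (Fin 3) (Fin 3) ℝ) *ᵥ f =
      f ᵥ* ((g⁻¹ : GL3) : Matrix (Fin 3) (Fin 3) ℝ) := Matrix.mulVec_transpose _ _
  rw [h1, Matrix.dotProduct_mulVec, Matrix.vecMul_vecMul, Units.inv_mul, Matrix.vecMul_one]

lemma flagPair_mem (g : GL3) {x : RP2 × RP2} (hx : x ∈ FlagSpace) :
    (RP2.mapMat g x.1, RP2.mapMat (dualGL g) x.2) ∈ FlagSpace := by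
  obtain ⟨p, q⟩ := x
  revert hx
  refine Quotient.inductionOn₂ p q ?_
  rintro ⟨v, hv⟩ ⟨f, hf⟩ hx
  have h0 : f ⬝ᵥ v = 0 := hx v f hv hf rfl rfl
  exact mem_flagSpace_mk _ _ (by rw [dot_invariance]; exact h0)

/-- The action of `g ∈ GL(3,ℝ)` on the flag space,
`g · ([v], [f]) = ([g v], [f ∘ g⁻¹])`. -/
def flagMap (g : GL3) (x : Flag3) : Flag3 :=
  ⟨(RP2.mapMat g x.1.1, RP2.mapMat (dualGL g) x.1.2), flagPair_mem g x.2⟩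

/-! ### Composition laws and continuity -/

lemma RP2.mapMat_mapMat (g h : GL3) (p : RP2) :
    RP2.mapMat g (RP2.mapMat h p) = RP2.mapMat (g * h) p := by
  refine Quotient.inductionOn p fun a => ?_
  apply Quotient.sound
  exact ⟨1, one_ne_zero, by simp [Matrix.mulVec_mulVec, Units.val_mul]⟩

lemma RP2.mapMat_one (p : RP2) : RP2.mapMat 1 p = p := by
  refine Quotient.inductionOn p fun a => ?_
  apply Quotient.sound
  exact ⟨1, one_ne_zero, by simp [Matrix.one_mulVec, Units.val_one]⟩

lemma dualGL_mul (g h : GL3) : dualGL (g * h) = dualGL g * dualGL h := by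
  apply Units.ext
  rw [Units.val_mul]
  show (((g * h)⁻¹ : GL3) : Matrix (Fin 3) (Fin 3) ℝ)ᵀ =
    ((g⁻¹ : GL3) : Matrix (Fin 3) (Fin 3) ℝ)ᵀ * ((h⁻¹ : GL3) : Matrix (Fin 3) (Fin 3) ℝ)ᵀ
  rw [_root_.mul_inv_rev, Units.val_mul, Matrix.transpose_mul]

lemma dualGL_one : dualGL (1 : GL3) = 1 := by
  apply Units.ext
  show (((1 : GL3)⁻¹ : GL3) : Matrix (Fin 3) (Fin 3) ℝ)ᵀ = ((1 : GL3) : Matrix (Fin 3) (Fin 3) ℝ)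
  rw [inv_one, Units.val_one, Matrix.transpose_one]

lemma flagMap_flagMap (g h : GL3) (x : Flag3) :
    flagMap g (flagMap h x) = flagMap (g * h) x := by
  apply Subtype.ext
  apply Prod.ext
  · exact RP2.mapMat_mapMat g h x.1.1
  · show RP2.mapMat (dualGL g) (RP2.mapMat (dualGL h) x.1.2) = RP2.mapMat (dualGL (g * h)) x.1.2
    rw [RP2.mapMat_mapMat, dualGL_mul]

lemma flagMap_one (x : Flag3) : flagMap 1 x = x := by
  apply Subtype.ext
  apply Prod.ext
  · exact RP2.mapMat_one x.1.1
  · show RP2.mapMat (dualGL 1) x.1.2 = x.1.2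
    rw [dualGL_one, RP2.mapMat_one]

lemma continuous_mulVec (M : Matrix (Fin 3) (Fin 3) ℝ) :
    Continuous fun v : V3 => M *ᵥ v := by
  have h : (fun v : V3 => M *ᵥ v) = fun v => fun i => ∑ j, M i j * v j := by
    funext v i
    simp [Matrix.mulVec, dotProduct]
  rw [h]
  exact continuous_pi fun i =>
    continuous_finset_sum _ fun j _ => continuous_const.mul (continuous_apply j)

lemma continuous_mapMat (g : GL3) : Continuous (RP2.mapMat g) := by
  apply Continuous.quotient_lift
  exact continuous_quotient_mk'.comp
    (Continuous.subtype_mk ((continuous_mulVec _).comp continuous_subtype_val) _)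

lemma continuous_flagMap (g : GL3) : Continuous (flagMap g) := by
  apply Continuous.subtype_mk
  exact ((continuous_mapMat g).comp (continuous_fst.comp continuous_subtype_val)).prodMk
    ((continuous_mapMat (dualGL g)).comp (continuous_snd.comp continuous_subtype_val))

/-- The action of `g ∈ GL(3,ℝ)` on the flag space, as a homeomorphism. -/
def flagHomeo (g : GL3) : Flag3 ≃ₜ Flag3 where
  toFun := flagMap g
  invFun := flagMap g⁻¹
  left_inv := fun x => by rw [flagMap_flagMap, inv_mul_cancel, flagMap_one]
  right_inv := fun x => by rw [flagMap_flagMap, mul_inv_cancel, flagMap_one]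
  continuous_toFun := continuous_flagMap g
  continuous_invFun := continuous_flagMap g⁻¹

/-- The group of homeomorphisms of a topological space
(with `(f * g) x = f (g x)`). -/
instance homeoGroup (Z : Type*) [TopologicalSpace Z] : Group (Z ≃ₜ Z) where
  mul f g := g.trans f
  one := Homeomorph.refl Z
  inv := Homeomorph.symm
  mul_assoc _ _ _ := Homeomorph.ext fun _ => rfl
  one_mul _ := Homeomorph.ext fun _ => rfl
  mul_one _ := Homeomorph.ext fun _ => rfl
  inv_mul_cancel f := Homeomorph.ext fun x => f.symm_apply_apply x

/-! ### Geometric objects in the flag space -/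

/-- The α-circle of a point `p ∈ ℝP²`: all flags whose point is `p`. -/
def Cα (p : RP2) : Set Flag3 := {x | x.1.1 = p}

/-- The β-circle of the projective line with defining form (class) `q`:
all flags whose plane is `ker q`. -/
def Cβ (q : RP2) : Set Flag3 := {x | x.1.2 = q}

/-- The plane of the flag `x` contains the direction of the vector `u`. -/
def planeContains (x : Flag3) (u : V3) : Prop :=
  ∀ (f : V3) (hf : f ≠ 0), x.1.2 = RP2.mk f hf → f ⬝ᵥ u = 0

/-- The point of the flag `x` lies on the projective line defined by the linear
form of coefficients `w`. -/
def pointOnForm (x : Flag3) (w : V3) : Prop :=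
  ∀ (v : V3) (hv : v ≠ 0), x.1.1 = RP2.mk v hv → w ⬝ᵥ v = 0

/-- The β-circle of the projective line spanned by the (independent) directions of
`u` and `w`: all flags whose plane contains both. -/
def CβSpan (u w : V3) : Set Flag3 := {x | planeContains x u ∧ planeContains x w}

lemma li_ne_zero_0 {v1 v2 v3 : V3} (h : LinearIndependent ℝ ![v1, v2, v3]) : v1 ≠ 0 := by
  have := h.ne_zero 0; simpa using this

lemma li_ne_zero_1 {v1 v2 v3 : V3} (h : LinearIndependent ℝ ![v1, v2, v3]) : v2 ≠ 0 := by
  have := h.ne_zero 1; simpa using this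

lemma li_ne_zero_2 {v1 v2 v3 : V3} (h : LinearIndependent ℝ ![v1, v2, v3]) : v3 ≠ 0 := by
  have := h.ne_zero 2; simpa using this

/-- The repulsive bouquet of circles `B⁻(g) = C_α([v₃]) ∪ C_β(span(v₂,v₃))` of a
loxodromic element with eigenvectors `v₁, v₂, v₃` (eigenvalues in decreasing order
of modulus). -/
def bouquetMinus (v2 v3 : V3) (h3 : v3 ≠ 0) : Set Flag3 :=
  Cα (RP2.mk v3 h3) ∪ CβSpan v2 v3

/-- The attractive bouquet of circles `B⁺(g) = C_α([v₁]) ∪ C_β(span(v₁,v₂))`. -/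
def bouquetPlus (v1 v2 : V3) (h1 : v1 ≠ 0) : Set Flag3 :=
  Cα (RP2.mk v1 h1) ∪ CβSpan v1 v2

/-- The dynamic set of a point `x` under a sequence of maps `g n`: all limits of
`g (n k) (x k)` for a strictly increasing sequence `(n k)` and a sequence `x k → x`. -/
def DynSet {M : Type*} [TopologicalSpace M] (g : ℕ → M → M) (x : M) : Set M :=
  {y | ∃ φ : ℕ → ℕ, StrictMono φ ∧ ∃ u : ℕ → M,
    Tendsto u atTop (𝓝 x) ∧ Tendsto (fun k => g (φ k) (u k)) atTop (𝓝 y)}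

end

/-!
Index the tables by the letters of the free group: `(i, true)` stands for `gᵢ` with table
`Hᵢ⁺`, and `(i, false)` for `gᵢ⁻¹` with table `Hᵢ⁻`. The hypothesis `Hᵢ⁺ = X ∖ int(gᵢ Hᵢ⁻)`
says that every letter maps the complement of the table of its inverse onto the interior of
its own table. Hence a nonempty reduced word maps `D = X ∖ ⋃ int(tables) = closure U` into the
table of its first letter, and into the interior of that table once the word has length at
least two. So no nontrivial element fixes a point of `D` (a fixed point of a single letter
would lie in two disjoint tables), and only the finitely many elements of length at most one
bring a point of `D` back into `D`. The translates of `D` by these elements cover a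
neighbourhood of `D`, which makes `Ω` open and, by compactness, the action properly
discontinuous. Finally `D` is nonempty, because the α-circle of the middle eigenvector is
connected and meets both `int Hᵢ⁻` and `int Hᵢ⁺`.
-/

section HomeomorphGroup

variable {Z : Type*} [TopologicalSpace Z]

lemma Homeomorph.image_mul (g h : Z ≃ₜ Z) (s : Set Z) : ⇑(g * h) '' s = g '' (h '' s) :=
  Set.image_comp g h s

def returnSet (Γ : Subgroup (Z ≃ₜ Z)) (K : Set Z) : Set (Z ≃ₜ Z) :=
  {γ | γ ∈ Γ ∧ ((γ : Z → Z) '' K ∩ K).Nonempty}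

variable {Γ : Subgroup (Z ≃ₜ Z)}

lemma finite_returnSet_of_subset_biUnion {M K : Set Z} {F : Set (Z ≃ₜ Z)}
    (hM : (returnSet Γ M).Finite) (hF : F.Finite) (hFΓ : F ⊆ Γ)
    (hK : K ⊆ ⋃ δ ∈ F, (δ : Z → Z) '' M) : (returnSet Γ K).Finite := by
  refine ((hF.prod (hM.prod hF)).image fun p => p.1 * p.2.1 * p.2.2⁻¹).subset ?_
  rintro γ ⟨hγ, _, ⟨x, hxK, rfl⟩, hγxK⟩
  obtain ⟨δ, hδ, m, hm, rfl⟩ := Set.mem_iUnion₂.1 (hK hxK)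
  obtain ⟨δ', hδ', m', hm', hm'eq⟩ := Set.mem_iUnion₂.1 (hK hγxK)
  refine ⟨(δ', δ'⁻¹ * γ * δ, δ), ⟨hδ', ⟨?_, m', ⟨m, hm, ?_⟩, hm'⟩, hδ⟩, by group⟩
  · exact mul_mem (mul_mem (inv_mem (hFΓ hδ')) hγ) (hFΓ hδ)
  · simp [← hm'eq]

lemma IsCompact.finite_returnSet {K N : Set Z} (hK : IsCompact K) (hN : IsOpen N)
    (hNfin : (returnSet Γ N).Finite) (hKN : K ⊆ ⋃ γ ∈ Γ, (γ : Z → Z) '' N) :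
    (returnSet Γ K).Finite := by
  obtain ⟨F, hFΓ, hF, hKF⟩ :=
    hK.elim_finite_subcover_image (fun γ _ => γ.isOpenMap N hN) hKN
  exact finite_returnSet_of_subset_biUnion hNfin hF hFΓ hKF

lemma biUnion_image_eq_of_subset {D N : Set Z} (hDN : D ⊆ N)
    (hN : N ⊆ ⋃ γ ∈ Γ, (γ : Z → Z) '' D) :
    ⋃ γ ∈ Γ, (γ : Z → Z) '' N = ⋃ γ ∈ Γ, (γ : Z → Z) '' D := by
  refine subset_antisymm ?_ (Set.biUnion_mono subset_rfl fun γ _ => Set.image_mono hDN)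
  refine Set.iUnion₂_subset fun γ hγ => ?_
  rintro _ ⟨x, hx, rfl⟩
  obtain ⟨δ, hδ, y, hy, rfl⟩ := Set.mem_iUnion₂.1 (hN hx)
  exact Set.mem_iUnion₂.2 ⟨γ * δ, mul_mem hγ hδ, y, hy, rfl⟩

lemma apply_mem_biUnion_image {D : Set Z} {γ : Z ≃ₜ Z} (hγ : γ ∈ Γ) {x : Z}
    (hx : x ∈ ⋃ δ ∈ Γ, (δ : Z → Z) '' D) : γ x ∈ ⋃ δ ∈ Γ, (δ : Z → Z) '' D := by
  obtain ⟨δ, hδ, y, hy, rfl⟩ := Set.mem_iUnion₂.1 hx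
  exact Set.mem_iUnion₂.2 ⟨γ * δ, mul_mem hγ hδ, y, hy, rfl⟩

lemma eq_one_of_apply_eq_of_mem_biUnion_image {D : Set Z}
    (hD : ∀ γ ∈ Γ, ∀ y ∈ D, γ y = y → γ = 1) {γ : Z ≃ₜ Z} (hγ : γ ∈ Γ) {x : Z}
    (hx : x ∈ ⋃ δ ∈ Γ, (δ : Z → Z) '' D) (hfix : γ x = x) : γ = 1 := by
  obtain ⟨δ, hδ, y, hy, rfl⟩ := Set.mem_iUnion₂.1 hx
  have hconj : δ⁻¹ * γ * δ = 1 :=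
    hD _ (mul_mem (mul_mem (inv_mem hδ) hγ) hδ) y hy (by simp [hfix])
  simpa [mul_assoc] using congrArg (fun e => δ * e * δ⁻¹) hconj

end HomeomorphGroup

section DisjointFamilies

variable {κ Z : Type*} [TopologicalSpace Z]

open Function

lemma interior_iUnion_of_pairwise_disjoint [Finite κ] {S : κ → Set Z}
    (hS : ∀ a, IsClosed (S a)) (hd : Pairwise (Disjoint on S)) :
    interior (⋃ a, S a) = ⋃ a, interior (S a) := by
  refine subset_antisymm (fun x hx => ?_)
    (Set.iUnion_subset fun a => interior_mono (Set.subset_iUnion S a))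
  obtain ⟨a, hxa⟩ := Set.mem_iUnion.1 (interior_subset hx)
  set B := ⋃ b ∈ {b | b ≠ a}, S b
  have hB : IsClosed B := (Set.toFinite _).isClosed_biUnion fun b _ => hS b
  have hxB : x ∉ B := by
    simp only [B, Set.mem_iUnion, not_exists]
    exact fun b hb hxb => Set.disjoint_left.1 (hd hb) hxb hxa
  have hsub : ⋃ b, S b ⊆ S a ∪ B := fun y hy => by
    obtain ⟨b, hyb⟩ := Set.mem_iUnion.1 hy
    by_cases hba : b = a
    · exact Or.inl (hba ▸ hyb)
    · exact Or.inr (Set.mem_biUnion hba hyb)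
  exact Set.mem_iUnion.2 ⟨a, interior_union_inter_interior_compl_right_subset
    ⟨interior_mono hsub hx, hB.isOpen_compl.interior_eq.symm ▸ hxB⟩⟩

lemma IsPreconnected.not_subset_iUnion_of_pairwise_disjoint {V : κ → Set Z}
    (hV : ∀ c, IsOpen (V c)) (hd : Pairwise (Disjoint on V))
    {C : Set Z} (hC : IsPreconnected C) {a b : κ} (hab : a ≠ b) (ha : (C ∩ V a).Nonempty)
    (hb : (C ∩ V b).Nonempty) : ¬ C ⊆ ⋃ c, V c := by
  intro hcov
  have hsplit : C ⊆ V a ∪ ⋃ c ∈ {c | c ≠ a}, V c := fun x hx => by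
    obtain ⟨c, hxc⟩ := Set.mem_iUnion.1 (hcov hx)
    by_cases hca : c = a
    · exact Or.inl (hca ▸ hxc)
    · exact Or.inr (Set.mem_biUnion hca hxc)
  have hCa := hC.subset_left_of_subset_union (hV a) (isOpen_biUnion fun c _ => hV c)
    (Set.disjoint_iUnion₂_right.2 fun c hc => hd (Ne.symm hc)) hsplit ha
  obtain ⟨x, hxC, hxb⟩ := hb
  exact Set.disjoint_left.1 (hd hab) (hCa hxC) hxb

end DisjointFamilies

namespace FreeGroup

variable {ι : Type*}

lemma mk_singleton_inv (a : ι × Bool) : mk [(a.1, !a.2)] = (mk [a])⁻¹ := by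
  simp [inv_mk, invRev]

lemma lift_mk_cons {G : Type*} [Group G] (f : ι → G) (a : ι × Bool) (L : List (ι × Bool)) :
    lift f (mk (a :: L)) = lift f (mk [a]) * lift f (mk L) := by
  rw [← _root_.map_mul, mul_mk]
  rfl

end FreeGroup

section PingPong

variable {ι Z : Type*} [TopologicalSpace Z]

open FreeGroup Function

structure IsPingPongTable (f : ι → Z ≃ₜ Z) (S : ι × Bool → Set Z) : Prop where
  pairwise_disjoint : Pairwise (Disjoint on S)
  image_compl : ∀ a, lift f (mk [a]) '' (S (a.1, !a.2))ᶜ = interior (S a)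

def pingPongDomain (S : ι × Bool → Set Z) : Set Z := (⋃ a, interior (S a))ᶜ

namespace IsPingPongTable

variable {f : ι → Z ≃ₜ Z} {S : ι × Bool → Set Z} (h : IsPingPongTable f S)
include h

lemma image_interior_inv (a : ι × Bool) :
    lift f (FreeGroup.mk [a]) '' interior (S (a.1, !a.2)) = (S a)ᶜ := by
  have hinv := h.image_compl (a.1, !a.2)
  simp only [Bool.not_not, mk_singleton_inv, _root_.map_inv] at hinv
  rw [← hinv]
  exact (lift f (FreeGroup.mk [a])).image_symm_image _

lemma isClosed (a : ι × Bool) : IsClosed (S a) := by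
  rw [← isOpen_compl_iff, ← h.image_interior_inv a]
  exact (lift f (FreeGroup.mk [a])).isOpenMap _ isOpen_interior

lemma image_subset_interior {a b : ι × Bool} (hab : a.1 = b.1 → a.2 = b.2) :
    lift f (FreeGroup.mk [a]) '' S b ⊆ interior (S a) := by
  rw [← h.image_compl a]
  refine Set.image_mono fun x hxb hxa => ?_
  refine Set.disjoint_left.1 (h.pairwise_disjoint fun hb => ?_) hxb hxa
  subst hb
  simp at hab

lemma image_domain_subset (a : ι × Bool) :
    lift f (FreeGroup.mk [a]) '' pingPongDomain S ⊆ S a := by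
  rw [← compl_compl (S a), ← h.image_interior_inv a, ← Homeomorph.image_compl]
  exact Set.image_mono fun x hx hxa => hx (Set.mem_iUnion.2 ⟨_, hxa⟩)

lemma image_domain_subset_of_isReduced {a : ι × Bool} {L : List (ι × Bool)}
    (hL : IsReduced (a :: L)) : lift f (FreeGroup.mk (a :: L)) '' pingPongDomain S ⊆ S a := by
  induction L generalizing a with
  | nil => exact h.image_domain_subset a
  | cons b L ih =>
    obtain ⟨hab, hbL⟩ := isReduced_cons_cons.1 hL
    rw [lift_mk_cons, Homeomorph.image_mul]
    exact (Set.image_mono (ih hbL)).trans ((h.image_subset_interior hab).trans interior_subset)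

lemma image_domain_subset_interior {a b : ι × Bool} {L : List (ι × Bool)}
    (hL : IsReduced (a :: b :: L)) :
    lift f (FreeGroup.mk (a :: b :: L)) '' pingPongDomain S ⊆ interior (S a) := by
  obtain ⟨hab, hbL⟩ := isReduced_cons_cons.1 hL
  rw [lift_mk_cons, Homeomorph.image_mul]
  exact (Set.image_mono (h.image_domain_subset_of_isReduced hbL)).trans
    (h.image_subset_interior hab)

lemma apply_ne_self {u : FreeGroup ι} (hu : u ≠ 1) {y : Z} (hy : y ∈ pingPongDomain S) :
    lift f u y ≠ y := by
  classical
  obtain ⟨a, L, hL⟩ := List.exists_cons_of_ne_nil (mt toWord_eq_nil_iff.1 hu)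
  have hred : IsReduced (a :: L) := hL ▸ isReduced_toWord
  rw [← mk_toWord (x := u), hL]
  intro hfix
  cases L with
  | nil =>
    have hya : y ∈ S a := hfix ▸ h.image_domain_subset a ⟨y, hy, rfl⟩
    have hfix' : lift f (FreeGroup.mk [(a.1, !a.2)]) y = y := by
      rw [mk_singleton_inv, _root_.map_inv, Homeomorph.inv_apply, Homeomorph.symm_apply_eq, hfix]
    have hya' : y ∈ S (a.1, !a.2) := hfix' ▸ h.image_domain_subset _ ⟨y, hy, rfl⟩
    exact Set.disjoint_left.1
      (h.pairwise_disjoint fun he => by simp [Prod.ext_iff] at he) hya hya'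
  | cons b L =>
    exact hy (Set.mem_iUnion.2 ⟨a, hfix ▸ h.image_domain_subset_interior hred ⟨y, hy, rfl⟩⟩)

lemma eq_one_of_apply_eq {γ : Z ≃ₜ Z} (hγ : γ ∈ (lift f).range) {y : Z}
    (hy : y ∈ pingPongDomain S) (hfix : γ y = y) : γ = 1 := by
  obtain ⟨u, rfl⟩ := hγ
  by_contra hne
  exact h.apply_ne_self (fun hu => hne (by rw [hu, _root_.map_one])) hy hfix

lemma injective_lift (hD : (pingPongDomain S).Nonempty) : Injective (lift f) := by
  obtain ⟨y, hy⟩ := hD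
  refine (injective_iff_map_eq_one _).2 fun u hu => ?_
  by_contra hne
  exact h.apply_ne_self hne hy (by rw [hu]; rfl)

variable [Finite ι]

lemma finite_returnSet_domain : (returnSet (lift f).range (pingPongDomain S)).Finite := by
  classical
  refine (((List.finite_length_le (ι × Bool) 1).preimage toWord_injective.injOn).image
    (lift f)).subset ?_
  rintro _ ⟨⟨u, rfl⟩, _, ⟨y, hy, rfl⟩, hyD⟩
  refine ⟨u, ?_, rfl⟩
  match hL : u.toWord with
  | [] | [_] => simp [hL]
  | a :: b :: L =>
    have hred : IsReduced (a :: b :: L) := hL ▸ isReduced_toWord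
    rw [← mk_toWord (x := u), hL] at hyD
    exact absurd (Set.mem_iUnion.2 ⟨a, h.image_domain_subset_interior hred ⟨y, hy, rfl⟩⟩) hyD

lemma closure_compl_iUnion : closure (⋃ a, S a)ᶜ = pingPongDomain S := by
  rw [closure_compl, interior_iUnion_of_pairwise_disjoint h.isClosed h.pairwise_disjoint]
  rfl

lemma domain_subset_interior_adjacent :
    pingPongDomain S ⊆ interior (⋃ δ ∈ insert 1 (Set.range fun a => lift f (FreeGroup.mk [a])),
      (δ : Z → Z) '' pingPongDomain S) := by
  intro y hy
  rw [mem_interior_iff_mem_nhds]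
  have hfar : ∀ᶠ z in 𝓝 y, ∀ a b : ι × Bool,
      (a.1 = b.1 → a.2 = b.2) → z ∉ lift f (FreeGroup.mk [a]) '' S b := by
    simp only [eventually_all]
    refine fun a b hab =>
      ((lift f (FreeGroup.mk [a])).isClosedMap _ (h.isClosed b)).isOpen_compl.mem_nhds
        fun hyab => hy (Set.mem_iUnion.2 ⟨a, h.image_subset_interior hab hyab⟩)
  filter_upwards [hfar] with z hz
  simp only [Set.biUnion_insert, Set.biUnion_range]
  by_cases hzD : z ∈ pingPongDomain S
  · exact Or.inl ⟨z, hzD, rfl⟩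
  obtain ⟨a, hza⟩ := Set.mem_iUnion.1 (Set.notMem_compl_iff.1 hzD)
  set t := lift f (FreeGroup.mk [a])
  refine Or.inr (Set.mem_iUnion.2 ⟨a, t.symm z, fun hmem => ?_, t.apply_symm_apply z⟩)
  obtain ⟨b, hb⟩ := Set.mem_iUnion.1 hmem
  by_cases hab : a.1 = b.1 → a.2 = b.2
  · exact hz a b hab ⟨_, interior_subset hb, t.apply_symm_apply z⟩
  · have hb' : b = (a.1, !a.2) := by
      rcases a with ⟨i, _ | _⟩ <;> rcases b with ⟨j, _ | _⟩ <;> simp_all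
    subst hb'
    exact (h.image_interior_inv a ▸ ⟨_, hb, t.apply_symm_apply z⟩ : z ∈ (S a)ᶜ)
      (interior_subset hza)

lemma exists_isOpen_superset_domain : ∃ N : Set Z, IsOpen N ∧ pingPongDomain S ⊆ N ∧
    N ⊆ ⋃ γ ∈ (lift f).range, (γ : Z → Z) '' pingPongDomain S ∧
    (returnSet (lift f).range N).Finite := by
  set F := insert 1 (Set.range fun a => lift f (FreeGroup.mk [a]))
  have hFΓ : F ⊆ (lift f).range := by
    rintro _ (rfl | ⟨a, rfl⟩)
    exacts [one_mem _, ⟨_, rfl⟩]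
  refine ⟨_, isOpen_interior, h.domain_subset_interior_adjacent,
    interior_subset.trans (Set.biUnion_subset_biUnion_left hFΓ), ?_⟩
  exact finite_returnSet_of_subset_biUnion h.finite_returnSet_domain
    ((Set.finite_range _).insert 1) hFΓ interior_subset

lemma isOpen_biUnion_image_domain :
    IsOpen (⋃ γ ∈ (lift f).range, (γ : Z → Z) '' pingPongDomain S) := by
  obtain ⟨N, hN, hDN, hNΩ, -⟩ := h.exists_isOpen_superset_domain
  rw [← biUnion_image_eq_of_subset hDN hNΩ]
  exact isOpen_biUnion fun γ _ => γ.isOpenMap N hN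

lemma finite_returnSet_of_isCompact {K : Set Z} (hK : IsCompact K)
    (hKΩ : K ⊆ ⋃ γ ∈ (lift f).range, (γ : Z → Z) '' pingPongDomain S) :
    (returnSet (lift f).range K).Finite := by
  obtain ⟨N, hN, hDN, hNΩ, hNfin⟩ := h.exists_isOpen_superset_domain
  exact hK.finite_returnSet hN hNfin (by rwa [biUnion_image_eq_of_subset hDN hNΩ])

end IsPingPongTable

end PingPong

section Tables

variable {ι Z : Type*}

open FreeGroup

def pingPongTable (Hm Hp : ι → Set Z) (a : ι × Bool) : Set Z := cond a.2 (Hp a.1) (Hm a.1)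

lemma iUnion_pingPongTable (Hm Hp : ι → Set Z) :
    ⋃ a, pingPongTable Hm Hp a = ⋃ i, (Hm i ∪ Hp i) := by
  simp only [Set.iUnion_prod', pingPongTable]
  exact Set.iUnion_congr fun i => by rw [Set.union_comm]; exact iSup_bool_eq

variable [TopologicalSpace Z]

lemma isPingPongTable_pingPongTable {f : ι → Z ≃ₜ Z} {Hm Hp : ι → Set Z}
    (hregm : ∀ i, Hm i = closure (interior (Hm i)))
    (hdisj1 : ∀ i j, i ≠ j → Disjoint (Hm i) (Hm j))
    (hdisj2 : ∀ i j, i ≠ j → Disjoint (Hp i) (Hp j))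
    (hdisj3 : ∀ i j, Disjoint (Hm i) (Hp j))
    (hHp : ∀ i, Hp i = Set.univ \ interior (f i '' Hm i)) :
    IsPingPongTable f (pingPongTable Hm Hp) := by
  have hint : ∀ i, f i '' interior (Hm i) = (Hp i)ᶜ := fun i => by
    rw [hHp i, Homeomorph.image_interior, ← Set.compl_eq_univ_sdiff, compl_compl]
  have hcompl : ∀ i, f i '' (Hm i)ᶜ = interior (Hp i) := fun i => by
    rw [← compl_compl (interior (Hp i)), ← closure_compl, ← hint, ← Homeomorph.image_closure,
      ← hregm, Homeomorph.image_compl]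
  refine ⟨?_, ?_⟩
  · rintro ⟨i, _ | _⟩ ⟨j, _ | _⟩ hne <;>
      simp only [Function.onFun, pingPongTable, cond_true, cond_false]
    · exact hdisj1 i j fun hij => hne (by rw [hij])
    · exact hdisj3 i j
    · exact (hdisj3 j i).symm
    · exact hdisj2 i j fun hij => hne (by rw [hij])
  · rintro ⟨i, _ | _⟩ <;> simp only [pingPongTable, lift_mk, List.map_cons, List.map_nil,
      List.prod_cons, List.prod_nil, mul_one, Bool.not_false, Bool.not_true, cond_true, cond_false]
    · rw [← hint]
      exact (f i).symm_image_image _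
    · exact hcompl i

end Tables

section Flags

open Function

lemma continuous_RP2_mk : Continuous fun v : {v : V3 // v ≠ 0} => RP2.mk v.1 v.2 :=
  continuous_quotient_mk'

instance : Nonempty Flag3 :=
  ⟨⟨(RP2.mk _ e1_ne, RP2.mk _ e3_ne),
    mem_flagSpace_mk _ _ (by simp [dotProduct, Fin.sum_univ_three])⟩⟩

instance : CompactSpace Flag3 := by
  set C : Set (V3 × V3) := Metric.sphere 0 1 ×ˢ Metric.sphere 0 1 ∩ {p | p.2 ⬝ᵥ p.1 = 0}
  have hne : ∀ {v : V3}, v ∈ Metric.sphere 0 1 → v ≠ 0 := fun hv =>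
    ne_zero_of_mem_unit_sphere ⟨_, hv⟩
  have : CompactSpace C := isCompact_iff_compactSpace.1 <|
    ((isCompact_sphere 0 1).prod (isCompact_sphere 0 1)).inter_right
      (isClosed_eq (by fun_prop) continuous_const)
  refine Function.Surjective.compactSpace (f := fun p : C =>
    ⟨(RP2.mk _ (hne p.2.1.1), RP2.mk _ (hne p.2.1.2)), mem_flagSpace_mk _ _ p.2.2⟩) ?_ ?_
  · refine Continuous.subtype_mk (Continuous.prodMk ?_ ?_) _
    · exact continuous_RP2_mk.comp (Continuous.subtype_mk
        (continuous_fst.comp continuous_subtype_val) fun p : C => hne p.2.1.1)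
    · exact continuous_RP2_mk.comp (Continuous.subtype_mk
        (continuous_snd.comp continuous_subtype_val) fun p : C => hne p.2.1.2)
  · rintro ⟨⟨p, q⟩, hx⟩
    induction p using RP2.ind with | h v hv => ?_
    induction q using RP2.ind with | h w hw => ?_
    have hunit : ∀ {u : V3} (hu : u ≠ 0), ‖u‖⁻¹ • u ∈ Metric.sphere (0 : V3) 1 :=
      fun {u} hu => by rw [mem_sphere_zero_iff_norm]; exact norm_smul_inv_norm hu
    have hmk : ∀ {u : V3} (hu : u ≠ 0) (h' : ‖u‖⁻¹ • u ≠ 0), RP2.mk _ h' = RP2.mk u hu :=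
      fun {u} hu _ => RP2.mk_eq_mk_iff.2 ⟨‖u‖, norm_ne_zero_iff.2 hu, by
        rw [smul_smul, mul_inv_cancel₀ (norm_ne_zero_iff.2 hu), one_smul]⟩
    refine ⟨⟨(‖v‖⁻¹ • v, ‖w‖⁻¹ • w), ⟨hunit hv, hunit hw⟩, ?_⟩, ?_⟩
    · simp [hx v w hv hw rfl rfl]
    · exact Subtype.ext (Prod.ext (hmk hv _) (hmk hw _))

lemma planeContains_mk {v f u : V3} (hv : v ≠ 0) (hf : f ≠ 0) (hvf : f ⬝ᵥ v = 0)
    (hu : f ⬝ᵥ u = 0) :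
    planeContains ⟨(RP2.mk v hv, RP2.mk f hf), mem_flagSpace_mk hv hf hvf⟩ u := by
  intro f' hf' heq
  obtain ⟨c, -, rfl⟩ := RP2.mk_eq_mk_iff.1 heq
  rw [smul_dotProduct, hu, smul_zero]

/-- The set `C` is the α-circle of `[a₁]`. -/
lemma exists_isPreconnected_meets_CβSpan {a₀ a₁ a₂ : V3}
    (hli : LinearIndependent ℝ ![a₀, a₁, a₂]) : ∃ C : Set Flag3, IsPreconnected C ∧
      (C ∩ CβSpan a₁ a₂).Nonempty ∧ (C ∩ CβSpan a₀ a₁).Nonempty := by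
  set M : Matrix (Fin 3) (Fin 3) ℝ := ![a₀, a₁, a₂]
  have hM : IsUnit M.det :=
    (M.isUnit_iff_isUnit_det).1 (linearIndependent_rows_iff_isUnit.1 hli)
  -- the forms vanishing at `a₁`, written in the basis dual to `(a₀, a₁, a₂)`
  set form : ℝ × ℝ → V3 := fun w => M⁻¹ *ᵥ ![w.1, 0, w.2]
  have hdot : ∀ w j, form w ⬝ᵥ M j = ![w.1, 0, w.2] j := fun w j => by
    rw [dotProduct_comm]
    change (M *ᵥ form w) j = _
    rw [mulVec_mulVec, mul_nonsing_inv _ hM, one_mulVec]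
  have hform : ∀ w : ({0}ᶜ : Set (ℝ × ℝ)), form w ≠ 0 := fun w hw => w.2 <| by
    have h0 := hdot w 0
    have h2 := hdot w 2
    simp only [hw, zero_dotProduct] at h0 h2
    exact Prod.ext h0.symm h2.symm
  have ha₁ : a₁ ≠ 0 := li_ne_zero_1 hli
  set θ : ({0}ᶜ : Set (ℝ × ℝ)) → Flag3 := fun w =>
    ⟨(RP2.mk a₁ ha₁, RP2.mk (form w) (hform w)), mem_flagSpace_mk _ _ (hdot w 1)⟩
  have hθ : Continuous θ := Continuous.subtype_mk (continuous_const.prodMk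
    (continuous_RP2_mk.comp (Continuous.subtype_mk (continuous_const.matrix_mulVec
      (continuous_fst.finCons (continuous_const.finCons (continuous_snd.finCons continuous_const)))
      |>.comp continuous_subtype_val) hform))) _
  have : PreconnectedSpace ({0}ᶜ : Set (ℝ × ℝ)) := Subtype.preconnectedSpace
    (isConnected_compl_singleton_of_one_lt_rank (by simp; norm_num) 0).isPreconnected
  refine ⟨Set.range θ, isPreconnected_range hθ, ⟨θ ⟨(1, 0), by simp⟩, ⟨_, rfl⟩, ?_⟩,
    ⟨θ ⟨(0, 1), by simp⟩, ⟨_, rfl⟩, ?_⟩⟩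
  · exact ⟨planeContains_mk _ _ (hdot _ 1) (hdot _ 1), planeContains_mk _ _ (hdot _ 1) (hdot _ 2)⟩
  · exact ⟨planeContains_mk _ _ (hdot _ 1) (hdot _ 0), planeContains_mk _ _ (hdot _ 1) (hdot _ 1)⟩

lemma pingPongDomain_pingPongTable_nonempty {ι : Type*} {Hm Hp : ι → Set Flag3}
    (hd : Pairwise (Disjoint on pingPongTable Hm Hp)) (v : ι → Fin 3 → V3)
    (hli : ∀ i, LinearIndependent ℝ ![v i 0, v i 1, v i 2])
    (hBm : ∀ i, CβSpan (v i 1) (v i 2) ⊆ interior (Hm i))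
    (hBp : ∀ i, CβSpan (v i 0) (v i 1) ⊆ interior (Hp i)) :
    (pingPongDomain (pingPongTable Hm Hp)).Nonempty := by
  rcases isEmpty_or_nonempty ι with hι | ⟨⟨i⟩⟩
  · exact ⟨Classical.arbitrary _, by simp [pingPongDomain]⟩
  obtain ⟨C, hC, ⟨xm, hxmC, hxm⟩, ⟨xp, hxpC, hxp⟩⟩ := exists_isPreconnected_meets_CβSpan (hli i)
  have hCD := hC.not_subset_iUnion_of_pairwise_disjoint (fun _ => isOpen_interior)
    (hd.mono fun _ _ hab => hab.mono interior_subset interior_subset)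
    (a := (i, false)) (b := (i, true)) (by simp) ⟨xm, hxmC, hBm i hxm⟩ ⟨xp, hxpC, hBp i hxp⟩
  obtain ⟨x, -, hx⟩ := Set.not_subset.1 hCD
  exact ⟨x, hx⟩

end Flags

theorem schottky_ping_pong_general (d : ℕ) (g : Fin d → GL3)
    (v : Fin d → Fin 3 → V3)
    (hli : ∀ i, LinearIndependent ℝ ![v i 0, v i 1, v i 2])
    (Hm Hp : Fin d → Set Flag3)
    (hregm : ∀ i, Hm i = closure (interior (Hm i)))
    (hdisj1 : ∀ i j, i ≠ j → Disjoint (Hm i) (Hm j))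
    (hdisj2 : ∀ i j, i ≠ j → Disjoint (Hp i) (Hp j))
    (hdisj3 : ∀ i j, Disjoint (Hm i) (Hp j))
    (hBm : ∀ i, bouquetMinus (v i 1) (v i 2) (li_ne_zero_2 (hli i)) ⊆ interior (Hm i))
    (hBp : ∀ i, bouquetPlus (v i 0) (v i 1) (li_ne_zero_0 (hli i)) ⊆ interior (Hp i))
    (hHp : ∀ i, Hp i = Set.univ \ interior (flagMap (g i) '' Hm i))
    (Γ : Subgroup (Flag3 ≃ₜ Flag3))
    (hΓ : Γ = Subgroup.closure (Set.range fun i => flagHomeo (g i)))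
    (U Ω : Set Flag3) (hU : U = Set.univ \ ⋃ i, (Hm i ∪ Hp i))
    (hΩ : Ω = ⋃ γ ∈ Γ, (γ : Flag3 → Flag3) '' closure U) :
    Function.Injective
      (FreeGroup.lift (fun i => flagHomeo (g i)) : FreeGroup (Fin d) →* (Flag3 ≃ₜ Flag3)) ∧
    IsOpen Ω ∧
    (∀ γ ∈ Γ, ∀ x ∈ Ω, (γ : Flag3 → Flag3) x ∈ Ω) ∧
    (∀ γ ∈ Γ, ∀ x ∈ Ω, (γ : Flag3 → Flag3) x = x → γ = 1) ∧
    (∀ K : Set Flag3, K ⊆ Ω → IsCompact K →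
      {γ : Flag3 ≃ₜ Flag3 | γ ∈ Γ ∧ ((γ : Flag3 → Flag3) '' K ∩ K).Nonempty}.Finite) ∧
    IsCompact (closure U) := by
  have h : IsPingPongTable (fun i => flagHomeo (g i)) (pingPongTable Hm Hp) :=
    isPingPongTable_pingPongTable hregm hdisj1 hdisj2 hdisj3 hHp
  have hD := pingPongDomain_pingPongTable_nonempty h.pairwise_disjoint v hli
    (fun i => Set.subset_union_right.trans (hBm i)) (fun i => Set.subset_union_right.trans (hBp i))
  have hclU : closure U = pingPongDomain (pingPongTable Hm Hp) := by
    rw [hU, ← Set.compl_eq_univ_sdiff, ← iUnion_pingPongTable, h.closure_compl_iUnion]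
  rw [← FreeGroup.range_lift_eq_closure] at hΓ
  rw [hclU] at hΩ
  subst hΓ hΩ
  exact ⟨h.injective_lift hD, h.isOpen_biUnion_image_domain,
    fun γ hγ x hx => apply_mem_biUnion_image hγ hx,
    fun γ hγ x hx => eq_one_of_apply_eq_of_mem_biUnion_image
      (fun _ hδ _ hy => h.eq_one_of_apply_eq hδ hy) hγ hx,
    fun K hKΩ hK => h.finite_returnSet_of_isCompact hK hKΩ, isClosed_closure.isCompact⟩

/-- Proposition 3.6 / Corollary 3.9(1): ping-pong for Schottky subgroups of
`PGL(3,ℝ)` acting on the flag space. -/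
theorem schottky_ping_pong (d : ℕ) (g : Fin d → GL3)
    (v : Fin d → Fin 3 → V3) (lam : Fin d → Fin 3 → ℝ)
    (hli : ∀ i, LinearIndependent ℝ ![v i 0, v i 1, v i 2])
    (heig : ∀ i k, (g i : Matrix (Fin 3) (Fin 3) ℝ) *ᵥ v i k = lam i k • v i k)
    (hlox : ∀ i, |lam i 0| > |lam i 1| ∧ |lam i 1| > |lam i 2| ∧ |lam i 2| > 0)
    (Hm Hp : Fin d → Set Flag3)
    (hnem : ∀ i, (Hm i).Nonempty) (hnep : ∀ i, (Hp i).Nonempty)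
    (hcm : ∀ i, IsCompact (Hm i)) (hcp : ∀ i, IsCompact (Hp i))
    (hregm : ∀ i, Hm i = closure (interior (Hm i)))
    (hregp : ∀ i, Hp i = closure (interior (Hp i)))
    (hdisj1 : ∀ i j, i ≠ j → Disjoint (Hm i) (Hm j))
    (hdisj2 : ∀ i j, i ≠ j → Disjoint (Hp i) (Hp j))
    (hdisj3 : ∀ i j, Disjoint (Hm i) (Hp j))
    (hBm : ∀ i, bouquetMinus (v i 1) (v i 2) (li_ne_zero_2 (hli i)) ⊆ interior (Hm i))
    (hBp : ∀ i, bouquetPlus (v i 0) (v i 1) (li_ne_zero_0 (hli i)) ⊆ interior (Hp i))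
    (hHp : ∀ i, Hp i = Set.univ \ interior (flagMap (g i) '' Hm i))
    (Γ : Subgroup (Flag3 ≃ₜ Flag3))
    (hΓ : Γ = Subgroup.closure (Set.range fun i => flagHomeo (g i)))
    (U Ω : Set Flag3) (hU : U = Set.univ \ ⋃ i, (Hm i ∪ Hp i))
    (hΩ : Ω = ⋃ γ ∈ Γ, (γ : Flag3 → Flag3) '' closure U) :
    Function.Injective
      (FreeGroup.lift (fun i => flagHomeo (g i)) : FreeGroup (Fin d) →* (Flag3 ≃ₜ Flag3)) ∧
    IsOpen Ω ∧
    (∀ γ ∈ Γ, ∀ x ∈ Ω, (γ : Flag3 → Flag3) x ∈ Ω) ∧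
    (∀ γ ∈ Γ, ∀ x ∈ Ω, (γ : Flag3 → Flag3) x = x → γ = 1) ∧
    (∀ K : Set Flag3, K ⊆ Ω → IsCompact K →
      {γ : Flag3 ≃ₜ Flag3 | γ ∈ Γ ∧ ((γ : Flag3 → Flag3) '' K ∩ K).Nonempty}.Finite) ∧
    IsCompact (closure U) :=
  schottky_ping_pong_general d g v hli Hm Hp hregm hdisj1 hdisj2 hdisj3 hBm hBp hHp Γ hΓ U Ω hU hΩ
end

section
/- Balanced dynamics on the flag space, repulsive part (Lemma 2.15, claims 1–3, diagonal case): Let a_n = diag(1, β_n, γ_n) ∈ GL(3,ℝ) with 0 < γ_n ≤ β_n ≤ 1 for all n, β_n → 0 and γ_n/β_n → 0, acting on the flag space X. For a flag x = ([v],[f]) ∈ X with v = (v₁,v₂,v₃) and f = [f₁:f₂:f₃]*: (1) if v₁ ≠ 0 and f₃ ≠ 0, then D_{(a_n)}(x) = {([e₁], [0:0:1]*)}; (2) if f₃ = 0 and v₁ ≠ 0, then D_{(a_n)}(x) = {([e₁],[g]) ∈ X : g(e₁) = 0} (the α-circle of [e₁]); (3) if v₁ = 0 and f₃ ≠ 0,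 then D_{(a_n)}(x) = {([w],[0:0:1]*) : w₃ = 0} (the β-circle of the plane spanned by e₁,e₂). -/
open Matrix Filter Topology Set

/-!
On the affine chart `{w₀ ≠ 0}` the matrix `a_n = diag(1, β_n, γ_n)` acts by
`(s, t) ↦ (β_n s, γ_n t)`, so `[a_n w] → [e₁]` locally uniformly there. Dually, `a_n` acts on
linear forms by `diag(1, β_n⁻¹, γ_n⁻¹) ∼ diag(γ_n, γ_n / β_n, 1)`, so `[f ∘ a_n⁻¹] → [0 : 0 : 1]*`
locally uniformly on `{f₃ ≠ 0}`. Local uniformity pins down the corresponding component of every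
point of the dynamic set, and constant sequences show that `([e₁], [0 : 0 : 1]*)` is attained.

In claims 2 and 3 the free component can be steered to any point of its circle: perturb the form
`f` by `(γ_n / β_n) t_n e₃*` (resp. the vector `v` by `β_n t_n e₁`), with `t_n` constant or tending
to `∞` slowly, and project the other member of the flag orthogonally so that the perturbed pairs
stay flags converging to `x`.
-/

namespace RP2

lemma mk'_of_ne {v : V3} (hv : v ≠ 0) : RP2.mk' v = RP2.mk v hv := dif_neg hv

lemma mk'_smul {c : ℝ} (hc : c ≠ 0) (v : V3) : RP2.mk' (c • v) = RP2.mk' v := by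
  by_cases hv : v = 0
  · rw [hv, smul_zero]
  · rw [mk'_of_ne hv, mk'_of_ne (smul_ne_zero hc hv)]
    exact RP2.mk_eq_mk_iff.2 ⟨c⁻¹, inv_ne_zero hc, by rw [smul_smul, inv_mul_cancel₀ hc, one_smul]⟩

lemma mapMat_mk' (g : GL3) {v : V3} (hv : v ≠ 0) :
    RP2.mapMat g (RP2.mk' v) = RP2.mk' ((g : Matrix (Fin 3) (Fin 3) ℝ) *ᵥ v) := by
  rw [mk'_of_ne hv, mk'_of_ne (GL3.mulVec_ne hv), RP2.mapMat_mk]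

lemma mk_eq_mk_iff_crossProduct_eq_zero {v w : V3} (hv : v ≠ 0) (hw : w ≠ 0) :
    RP2.mk v hv = RP2.mk w hw ↔ crossProduct w v = 0 := by
  rw [← Projectivization.mk_eq_mk_iff_crossProduct_eq_zero hw hv,
    Projectivization.mk_eq_mk_iff', RP2.mk_eq_mk_iff]
  constructor
  · rintro ⟨c, -, rfl⟩
    exact ⟨c, rfl⟩
  · rintro ⟨c, rfl⟩
    exact ⟨c, left_ne_zero_of_smul hw, rfl⟩

def mkSubtype (w : {v : V3 // v ≠ 0}) : RP2 := RP2.mk w.1 w.2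

theorem isOpenQuotientMap_mkSubtype : IsOpenQuotientMap mkSubtype := by
  refine ⟨RP2.ind (P := fun p => ∃ w, mkSubtype w = p) fun v hv => ⟨⟨v, hv⟩, rfl⟩,
    continuous_quot_mk, fun U hU => ?_⟩
  let scale (c : ℝˣ) (w : {v : V3 // v ≠ 0}) : {v : V3 // v ≠ 0} :=
    ⟨(c : ℝ) • w.1, smul_ne_zero c.ne_zero w.2⟩
  have hscale : ∀ c, Continuous (scale c) := fun c =>
    (continuous_const_smul _).comp continuous_subtype_val |>.subtype_mk _
  have hsat : mkSubtype ⁻¹' (mkSubtype '' U) = ⋃ c : ℝˣ, scale c ⁻¹' U := by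
    ext w
    simp only [Set.mem_preimage, Set.mem_image, Set.mem_iUnion]
    constructor
    · rintro ⟨u, hu, huw⟩
      obtain ⟨c, hc, hcw⟩ := Quotient.exact huw
      refine ⟨(Units.mk0 c hc)⁻¹, ?_⟩
      convert hu using 1
      ext1
      change c⁻¹ • w.1 = u.1
      rw [hcw, smul_smul, inv_mul_cancel₀ hc, one_smul]
    · rintro ⟨c, hc⟩
      exact ⟨scale c w, hc, Quotient.sound ⟨(c : ℝ)⁻¹, by simp, by simp [scale, smul_smul]⟩⟩
  exact isQuotientMap_quotient_mk'.isOpen_preimage.1 <|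
    hsat ▸ isOpen_iUnion fun c => hU.preimage (hscale c)

instance : T2Space RP2 := by
  refine (t2Space_iff_of_isOpenQuotientMap isOpenQuotientMap_mkSubtype).2 ?_
  have hrel : {q : {v : V3 // v ≠ 0} × {v : V3 // v ≠ 0} | mkSubtype q.1 = mkSubtype q.2} =
      (fun q => crossProduct q.2.1 q.1.1) ⁻¹' {0} := by
    ext ⟨⟨v, hv⟩, ⟨w, hw⟩⟩
    exact mk_eq_mk_iff_crossProduct_eq_zero hv hw
  have hcross : Continuous fun p : V3 × V3 => crossProduct p.1 p.2 := by
    simp only [cross_apply]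
    fun_prop
  rw [hrel]
  exact isClosed_singleton.preimage <| hcross.comp <|
    (continuous_subtype_val.comp continuous_snd).prodMk (continuous_subtype_val.comp continuous_fst)

lemma nhds_mk {v : V3} (hv : v ≠ 0) : 𝓝 (RP2.mk v hv) = map RP2.mk' (𝓝 v) := by
  have hcomp : mkSubtype = RP2.mk' ∘ Subtype.val := funext fun w => (mk'_of_ne w.2).symm
  rw [show RP2.mk v hv = mkSubtype ⟨v, hv⟩ from rfl,
    ← isOpenQuotientMap_mkSubtype.map_nhds_eq, nhds_induced, hcomp, ← Filter.map_map,
    Filter.map_comap_of_mem (by rw [Subtype.range_val_subtype]; exact isOpen_ne.mem_nhds hv)]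

lemma tendsto_mk' {α : Type*} {l : Filter α} {z : α → V3} {v : V3} (hv : v ≠ 0)
    (hz : Tendsto z l (𝓝 v)) : Tendsto (fun a => RP2.mk' (z a)) l (𝓝 (RP2.mk v hv)) := by
  rw [nhds_mk hv]
  exact tendsto_map.comp hz

lemma exists_eq_mk (p : RP2) : ∃ (v : V3) (hv : v ≠ 0), p = RP2.mk v hv :=
  RP2.ind (P := fun p => ∃ (v : V3) (hv : v ≠ 0), p = RP2.mk v hv) (fun v hv => ⟨v, hv, rfl⟩) p

section Tendsto

variable {α : Type*} {l : Filter α}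

lemma tendsto_mk'_of_tendsto_smul {c : α → ℝ} {z : α → V3} {v : V3} (hv : v ≠ 0)
    (hc : ∀ᶠ a in l, c a ≠ 0) (h : Tendsto (fun a => c a • z a) l (𝓝 v)) :
    Tendsto (fun a => RP2.mk' (z a)) l (𝓝 (RP2.mk v hv)) :=
  (RP2.tendsto_mk' hv h).congr' (hc.mono fun _ ha => RP2.mk'_smul ha _)

lemma tendsto_mapMat_of_tendsto_mk' {g : α → GL3} {v : V3} (hv : v ≠ 0) {p : RP2}
    (h : Tendsto (fun q : α × V3 => RP2.mk' ((g q.1 : Matrix (Fin 3) (Fin 3) ℝ) *ᵥ q.2))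
      (l ×ˢ 𝓝 v) (𝓝 p)) :
    Tendsto (fun q : α × RP2 => RP2.mapMat (g q.1) q.2) (l ×ˢ 𝓝 (RP2.mk v hv)) (𝓝 p) := by
  rw [RP2.nhds_mk hv, ← Filter.map_id (f := l), Filter.prod_map_map_eq, tendsto_map'_iff]
  refine h.congr' ?_
  filter_upwards [(eventually_ne_nhds hv).prod_inr l] with q hq
  exact (RP2.mapMat_mk' _ hq).symm

end Tendsto

end RP2

section DynSet

variable {M : Type*} [TopologicalSpace M] {g : ℕ → M → M} {x y : M}

lemma mem_dynSet_of_tendsto {u : ℕ → M} (hu : Tendsto u atTop (𝓝 x))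
    (hgu : Tendsto (fun n => g n (u n)) atTop (𝓝 y)) : y ∈ DynSet g x :=
  ⟨id, strictMono_id, u, hu, hgu⟩

lemma Filter.Tendsto.apply_of_tendsto_prod {X Y : Type*} [TopologicalSpace X] {F : ℕ × X → Y}
    {a : X} {l : Filter Y} (h : Tendsto F (atTop ×ˢ 𝓝 a) l)
    {u : ℕ → X} (hu : Tendsto u atTop (𝓝 a)) : Tendsto (fun n => F (n, u n)) atTop l :=
  h.comp (tendsto_id.prodMk hu)

lemma eq_of_mem_dynSet_of_tendsto {N : Type*} [TopologicalSpace N] [T2Space N] {p : M → N}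
    (hp : Continuous p) {z : N}
    (h : Tendsto (fun q : ℕ × M => p (g q.1 q.2)) (atTop ×ˢ 𝓝 x) (𝓝 z))
    (hy : y ∈ DynSet g x) : p y = z := by
  obtain ⟨φ, hφ, u, hu, hgu⟩ := hy
  exact tendsto_nhds_unique ((hp.tendsto y).comp hgu) (h.comp (hφ.tendsto_atTop.prodMk hu))

end DynSet

section Projective

variable {α : Type*} {l : Filter α}

lemma tendsto_mk'_diagonal_mulVec {d : α → V3} {i : Fin 3} (hdi : ∀ a, d a i ≠ 0)
    (hd : ∀ j, j ≠ i → Tendsto (fun a => d a j / d a i) l (𝓝 0)) {v : V3} (hv : v i ≠ 0) :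
    Tendsto (fun q : α × V3 => RP2.mk' (diagonal (d q.1) *ᵥ q.2)) (l ×ˢ 𝓝 v)
      (𝓝 (RP2.mk (Pi.single i 1) (by simp))) := by
  have hvi : ∀ᶠ q : α × V3 in l ×ˢ 𝓝 v, q.2 i ≠ 0 :=
    ((continuous_apply i).continuousAt.eventually_ne hv).prod_inr l
  refine RP2.tendsto_mk'_of_tendsto_smul _ (c := fun q => (d q.1 i * q.2 i)⁻¹)
    (hvi.mono fun q hq => inv_ne_zero (mul_ne_zero (hdi q.1) hq)) (tendsto_pi_nhds.2 fun j => ?_)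
  have hcoord : ∀ q : α × V3, ((d q.1 i * q.2 i)⁻¹ • (diagonal (d q.1) *ᵥ q.2)) j =
      d q.1 j / d q.1 i * (q.2 j / q.2 i) := fun q => by
    rw [Pi.smul_apply, mulVec_diagonal, smul_eq_mul]
    ring
  simp only [hcoord]
  by_cases hji : j = i
  · subst hji
    refine tendsto_const_nhds.congr' (hvi.mono fun q hq => ?_)
    simp [div_self (hdi q.1), div_self hq]
  · have hquot : Tendsto (fun q : α × V3 => q.2 j / q.2 i) (l ×ˢ 𝓝 v) (𝓝 (v j / v i)) :=
      (((continuous_apply j).tendsto v).div ((continuous_apply i).tendsto v) hv).comp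
        tendsto_snd
    simpa [Pi.single_eq_of_ne hji] using ((hd j hji).comp tendsto_fst).mul hquot

lemma exists_tendsto_mk'_smul_add {r : α → ℝ} (hr0 : ∀ n, 0 < r n) (hr : Tendsto r l (𝓝 0))
    {z : α → V3} {Z : V3} (hz : Tendsto z l (𝓝 Z)) (E : V3) {a b : ℝ}
    (hab : a • Z + b • E ≠ 0) :
    ∃ t : α → ℝ, Tendsto (fun n => r n * t n) l (𝓝 0) ∧
      Tendsto (fun n => RP2.mk' (t n • E + z n)) l (𝓝 (RP2.mk (a • Z + b • E) hab)) := by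
  by_cases ha : a = 0
  · subst ha
    have hb : b ≠ 0 := by rintro rfl; simp at hab
    have hsqrt : Tendsto (fun n => √(r n)) l (𝓝 0) := by simpa using hr.sqrt
    have hsqrt0 : ∀ n, √(r n) ≠ 0 := fun n => (Real.sqrt_pos.2 (hr0 n)).ne'
    refine ⟨fun n => (√(r n))⁻¹, ?_, ?_⟩
    · exact hsqrt.congr fun n => by rw [← div_eq_mul_inv, Real.div_sqrt]
    · refine RP2.tendsto_mk'_of_tendsto_smul _ (c := fun n => b * √(r n))
        (Eventually.of_forall fun n => mul_ne_zero hb (hsqrt0 n)) ?_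
      have hlim := (tendsto_const_nhds (x := b • E)).add
        (((tendsto_const_nhds (x := b)).mul hsqrt).smul hz)
      rw [mul_zero, zero_smul, add_zero] at hlim
      rw [zero_smul, zero_add]
      refine hlim.congr fun n => ?_
      rw [smul_add, smul_smul, mul_assoc, mul_inv_cancel₀ (hsqrt0 n), mul_one]
  · refine ⟨fun _ => b / a, by simpa using hr.mul_const (b / a), ?_⟩
    refine RP2.tendsto_mk'_of_tendsto_smul _ (c := fun _ => a) (Eventually.of_forall fun _ => ha) ?_
    have hlim := (tendsto_const_nhds (x := (b / a) • E)).add hz |>.const_smul a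
    convert hlim using 2
    rw [smul_add, smul_smul, mul_div_cancel₀ _ ha, add_comm]

end Projective

lemma exists_tendsto_dotProduct_eq_zero {α m : Type*} [Fintype m] {l : Filter α}
    {s : α → m → ℝ} {S T : m → ℝ} (hs : Tendsto s l (𝓝 S)) (hS : S ≠ 0) (hTS : T ⬝ᵥ S = 0) :
    ∃ s' : α → m → ℝ, Tendsto s' l (𝓝 T) ∧ ∀ a, s' a ⬝ᵥ s a = 0 := by
  refine ⟨fun a => T - ((T ⬝ᵥ s a) / (s a ⬝ᵥ s a)) • s a, ?_, fun a => ?_⟩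
  · have hdot : Continuous fun p : (m → ℝ) × (m → ℝ) => p.1 ⬝ᵥ p.2 :=
      continuous_fst.dotProduct continuous_snd
    have hTs : Tendsto (fun a => T ⬝ᵥ s a) l (𝓝 (T ⬝ᵥ S)) :=
      (hdot.tendsto (T, S)).comp (tendsto_const_nhds.prodMk_nhds hs)
    have hss : Tendsto (fun a => s a ⬝ᵥ s a) l (𝓝 (S ⬝ᵥ S)) :=
      (hdot.tendsto (S, S)).comp (hs.prodMk_nhds hs)
    have hlim := (tendsto_const_nhds (x := T)).sub
      ((hTs.div hss (dotProduct_self_eq_zero.not.2 hS)).smul hs)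
    simpa [hTS] using hlim
  · by_cases hsa : s a ⬝ᵥ s a = 0
    · simp [dotProduct_self_eq_zero.1 hsa]
    · rw [sub_dotProduct, smul_dotProduct, smul_eq_mul, div_mul_cancel₀ _ hsa, sub_self]

section Flags

lemma tendsto_flag_iff {α : Type*} {l : Filter α} {u : α → Flag3} {y : Flag3} :
    Tendsto u l (𝓝 y) ↔ Tendsto (fun a => (u a : RP2 × RP2).1) l (𝓝 (y : RP2 × RP2).1) ∧
      Tendsto (fun a => (u a : RP2 × RP2).2) l (𝓝 (y : RP2 × RP2).2) := by
  rw [tendsto_subtype_rng, nhds_prod_eq, tendsto_prod_iff']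

variable {g : ℕ → GL3} {v f : V3} {hv : v ≠ 0} {hf : f ≠ 0} {x y : Flag3}

lemma dotProduct_eq_zero_of_flag_eq_mk (hx : (x : RP2 × RP2) = (RP2.mk v hv, RP2.mk f hf)) :
    f ⬝ᵥ v = 0 :=
  x.2 v f hv hf (by rw [hx]) (by rw [hx])

lemma mem_dynSet_flagMap_of_tendsto (hx : (x : RP2 × RP2) = (RP2.mk v hv, RP2.mk f hf))
    {w h : ℕ → V3} (hw : Tendsto w atTop (𝓝 v)) (hh : Tendsto h atTop (𝓝 f))
    (hhw : ∀ n, h n ⬝ᵥ w n = 0)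
    (hy₁ : Tendsto (fun n => RP2.mk' ((g n : Matrix (Fin 3) (Fin 3) ℝ) *ᵥ w n)) atTop
      (𝓝 (y : RP2 × RP2).1))
    (hy₂ : Tendsto (fun n => RP2.mk' ((dualGL (g n) : Matrix (Fin 3) (Fin 3) ℝ) *ᵥ h n)) atTop
      (𝓝 (y : RP2 × RP2).2)) :
    y ∈ DynSet (fun n => flagMap (g n)) x := by
  classical
  have hne : ∀ᶠ n in atTop, w n ≠ 0 ∧ h n ≠ 0 := (hw.eventually_ne hv).and (hh.eventually_ne hf)
  -- `x` only fills in the finitely many `n` where `w n` or `h n` vanishes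
  let u : ℕ → Flag3 := fun n => if hn : w n ≠ 0 ∧ h n ≠ 0 then
    ⟨(RP2.mk (w n) hn.1, RP2.mk (h n) hn.2), mem_flagSpace_mk hn.1 hn.2 (hhw n)⟩ else x
  have hu : ∀ᶠ n in atTop, (u n : RP2 × RP2) = (RP2.mk' (w n), RP2.mk' (h n)) :=
    hne.mono fun n hn => by simp only [u, dif_pos hn, RP2.mk'_of_ne hn.1, RP2.mk'_of_ne hn.2]
  refine mem_dynSet_of_tendsto (u := u) ?_ ?_
  · rw [tendsto_subtype_rng, hx]
    exact ((RP2.tendsto_mk' hv hw).prodMk_nhds (RP2.tendsto_mk' hf hh)).congr'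
      (hu.mono fun n hn => hn.symm)
  · refine tendsto_flag_iff.2 ⟨hy₁.congr' ?_, hy₂.congr' ?_⟩ <;>
      filter_upwards [hu, hne] with n hun hn
    · change _ = RP2.mapMat (g n) (u n : RP2 × RP2).1
      rw [hun, RP2.mapMat_mk' _ hn.1]
    · change _ = RP2.mapMat (dualGL (g n)) (u n : RP2 × RP2).2
      rw [hun, RP2.mapMat_mk' _ hn.2]

lemma eq_of_mem_dynSet_flagMap {G : ℕ → GL3} {π : Flag3 → RP2} (hπ : Continuous π)
    (hgπ : ∀ n z, π (flagMap (g n) z) = RP2.mapMat (G n) (π z)) {p : RP2}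
    (h : Tendsto (fun q : ℕ × V3 => RP2.mk' ((G q.1 : Matrix (Fin 3) (Fin 3) ℝ) *ᵥ q.2))
      (atTop ×ˢ 𝓝 v) (𝓝 p))
    (hx : π x = RP2.mk v hv) (hy : y ∈ DynSet (fun n => flagMap (g n)) x) : π y = p := by
  refine eq_of_mem_dynSet_of_tendsto hπ ?_ hy
  have hsnd : Tendsto (fun q : ℕ × Flag3 => π q.2) (atTop ×ˢ 𝓝 x) (𝓝 (RP2.mk v hv)) := by
    rw [← hx]
    exact (hπ.tendsto x).comp tendsto_snd
  have hlim := (RP2.tendsto_mapMat_of_tendsto_mk' hv h).comp (tendsto_fst.prodMk hsnd)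
  simp only [Function.comp_def] at hlim
  simpa only [hgπ] using hlim

end Flags

section Balanced

variable {β γ : ℕ → ℝ} {A : ℕ → GL3} {v f : V3} {hv : v ≠ 0} {hf : f ≠ 0} {x y : Flag3}

lemma dualGL_val_of_val_eq_diagonal {g : GL3} {d : V3}
    (hg : (g : Matrix (Fin 3) (Fin 3) ℝ) = diagonal d) :
    (dualGL g : Matrix (Fin 3) (Fin 3) ℝ) = diagonal d⁻¹ := by
  have hd : ∀ i, d i ≠ 0 := by
    have hunit := g.isUnit
    rw [hg, isUnit_diagonal] at hunit
    exact fun i => (hunit.apply i).ne_zero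
  have hinv : ((g⁻¹ : GL3) : Matrix (Fin 3) (Fin 3) ℝ) = diagonal d⁻¹ := by
    refine Units.inv_eq_of_mul_eq_one_right ?_
    rw [hg, diagonal_mul_diagonal, ← diagonal_one]
    exact congrArg diagonal (funext fun i => mul_inv_cancel₀ (hd i))
  change ((g⁻¹ : GL3) : Matrix (Fin 3) (Fin 3) ℝ)ᵀ = _
  rw [hinv, diagonal_transpose]

lemma tendsto_mk'_mulVec_of_diagonal
    (hA : ∀ n, (A n : Matrix (Fin 3) (Fin 3) ℝ) = Matrix.diagonal ![1, β n, γ n])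
    (hβ : Tendsto β atTop (𝓝 0)) (hγ : Tendsto γ atTop (𝓝 0)) {v : V3} (hv : v 0 ≠ 0) :
    Tendsto (fun q : ℕ × V3 => RP2.mk' ((A q.1 : Matrix (Fin 3) (Fin 3) ℝ) *ᵥ q.2))
      (atTop ×ˢ 𝓝 v) (𝓝 (RP2.mk ![1, 0, 0] e1_ne)) := by
  simp only [hA]
  convert tendsto_mk'_diagonal_mulVec (l := atTop) (d := fun n => ![1, β n, γ n]) (i := 0) (by simp)
    (fun j hj => by fin_cases j <;> simp_all) hv using 3
  ext j
  fin_cases j <;> rfl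

lemma tendsto_mk'_dualGL_mulVec_of_diagonal
    (hA : ∀ n, (A n : Matrix (Fin 3) (Fin 3) ℝ) = Matrix.diagonal ![1, β n, γ n])
    (hγ0 : ∀ n, γ n ≠ 0) (hγ : Tendsto γ atTop (𝓝 0))
    (hratio : Tendsto (fun n => γ n / β n) atTop (𝓝 0)) {f : V3} (hf : f 2 ≠ 0) :
    Tendsto (fun q : ℕ × V3 => RP2.mk' ((dualGL (A q.1) : Matrix (Fin 3) (Fin 3) ℝ) *ᵥ q.2))
      (atTop ×ˢ 𝓝 f) (𝓝 (RP2.mk ![0, 0, 1] e3_ne)) := by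
  simp only [dualGL_val_of_val_eq_diagonal (hA _)]
  convert tendsto_mk'_diagonal_mulVec (l := atTop) (d := fun n => ![1, β n, γ n]⁻¹) (i := 2)
    (by simpa using hγ0) (fun j hj => by fin_cases j <;> simp_all [div_eq_mul_inv, mul_comm]) hf
    using 3
  ext j
  fin_cases j <;> rfl

lemma point_eq_e1_of_mem_dynSet
    (hA : ∀ n, (A n : Matrix (Fin 3) (Fin 3) ℝ) = Matrix.diagonal ![1, β n, γ n])
    (hβ : Tendsto β atTop (𝓝 0)) (hγ : Tendsto γ atTop (𝓝 0))
    (hx : (x : RP2 × RP2) = (RP2.mk v hv, RP2.mk f hf)) (hv0 : v 0 ≠ 0)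
    (hy : y ∈ DynSet (fun n => flagMap (A n)) x) :
    (y : RP2 × RP2).1 = RP2.mk ![1, 0, 0] e1_ne :=
  eq_of_mem_dynSet_flagMap (π := fun z : Flag3 => (z : RP2 × RP2).1)
    (continuous_fst.comp continuous_subtype_val) (fun _ _ => rfl)
    (tendsto_mk'_mulVec_of_diagonal hA hβ hγ hv0) (by rw [hx]) hy

lemma plane_eq_e3_of_mem_dynSet
    (hA : ∀ n, (A n : Matrix (Fin 3) (Fin 3) ℝ) = Matrix.diagonal ![1, β n, γ n])
    (hγ0 : ∀ n, γ n ≠ 0) (hγ : Tendsto γ atTop (𝓝 0))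
    (hratio : Tendsto (fun n => γ n / β n) atTop (𝓝 0))
    (hx : (x : RP2 × RP2) = (RP2.mk v hv, RP2.mk f hf)) (hf2 : f 2 ≠ 0)
    (hy : y ∈ DynSet (fun n => flagMap (A n)) x) :
    (y : RP2 × RP2).2 = RP2.mk ![0, 0, 1] e3_ne :=
  eq_of_mem_dynSet_flagMap (π := fun z : Flag3 => (z : RP2 × RP2).2)
    (continuous_snd.comp continuous_subtype_val) (fun _ _ => rfl)
    (tendsto_mk'_dualGL_mulVec_of_diagonal hA hγ0 hγ hratio hf2) (by rw [hx]) hy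

lemma mem_dynSet_of_eq_e1_e3
    (hA : ∀ n, (A n : Matrix (Fin 3) (Fin 3) ℝ) = Matrix.diagonal ![1, β n, γ n])
    (hγ0 : ∀ n, γ n ≠ 0) (hβ : Tendsto β atTop (𝓝 0)) (hγ : Tendsto γ atTop (𝓝 0))
    (hratio : Tendsto (fun n => γ n / β n) atTop (𝓝 0))
    (hx : (x : RP2 × RP2) = (RP2.mk v hv, RP2.mk f hf)) (hv0 : v 0 ≠ 0) (hf2 : f 2 ≠ 0)
    (hy : (y : RP2 × RP2) = (RP2.mk ![1, 0, 0] e1_ne, RP2.mk ![0, 0, 1] e3_ne)) :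
    y ∈ DynSet (fun n => flagMap (A n)) x := by
  refine mem_dynSet_flagMap_of_tendsto hx tendsto_const_nhds tendsto_const_nhds
    (fun _ => dotProduct_eq_zero_of_flag_eq_mk hx) ?_ ?_ <;> rw [hy]
  · exact (tendsto_mk'_mulVec_of_diagonal hA hβ hγ hv0).apply_of_tendsto_prod tendsto_const_nhds
  · exact (tendsto_mk'_dualGL_mulVec_of_diagonal hA hγ0 hγ hratio hf2).apply_of_tendsto_prod
      tendsto_const_nhds

lemma mem_dynSet_of_point_eq_e1
    (hA : ∀ n, (A n : Matrix (Fin 3) (Fin 3) ℝ) = Matrix.diagonal ![1, β n, γ n])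
    (hβ0 : ∀ n, 0 < β n) (hγ0 : ∀ n, 0 < γ n) (hβ : Tendsto β atTop (𝓝 0))
    (hγ : Tendsto γ atTop (𝓝 0)) (hratio : Tendsto (fun n => γ n / β n) atTop (𝓝 0))
    (hx : (x : RP2 × RP2) = (RP2.mk v hv, RP2.mk f hf)) (hv0 : v 0 ≠ 0) (hf2 : f 2 = 0)
    (hy : (y : RP2 × RP2).1 = RP2.mk ![1, 0, 0] e1_ne) :
    y ∈ DynSet (fun n => flagMap (A n)) x := by
  obtain ⟨g, hg, hyg⟩ := RP2.exists_eq_mk (y : RP2 × RP2).2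
  have hfv := dotProduct_eq_zero_of_flag_eq_mk hx
  have hg0 : g 0 = 0 := by simpa [dotProduct, Fin.sum_univ_three] using y.2 _ g e1_ne hg hy hyg
  have hf1 : f 1 ≠ 0 := by
    intro hf1
    have hf0 : f 0 = 0 := by
      simpa [dotProduct, Fin.sum_univ_three, hf1, hf2, hv0] using hfv
    exact hf (by ext j; fin_cases j <;> assumption)
  have hz : Tendsto (fun n => ![β n * f 0, f 1, 0]) atTop (𝓝 ![0, f 1, 0]) := by
    have hβf : Tendsto (fun n => β n * f 0) atTop (𝓝 0) := by simpa using hβ.mul_const (f 0)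
    refine tendsto_pi_nhds.2 fun j => ?_
    fin_cases j <;> simp [hβf]
  have hgZE : (g 1 / f 1) • ![0, f 1, 0] + g 2 • ![0, 0, 1] = g := by
    ext j; fin_cases j <;> simp [hg0, hf1]
  obtain ⟨t, ht, hlim⟩ := exists_tendsto_mk'_smul_add (fun n => div_pos (hγ0 n) (hβ0 n)) hratio hz
    ![0, 0, 1] (hgZE ▸ hg)
  set h : ℕ → V3 := fun n => ![f 0, f 1, γ n / β n * t n]
  have hh : Tendsto h atTop (𝓝 f) := by
    refine tendsto_pi_nhds.2 fun j => ?_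
    fin_cases j <;> simp [h, hf2, ht]
  obtain ⟨w, hw, hwh⟩ := exists_tendsto_dotProduct_eq_zero hh hf (by rwa [dotProduct_comm])
  refine mem_dynSet_flagMap_of_tendsto hx hw hh (fun n => by rw [dotProduct_comm, hwh]) ?_ ?_
  · rw [hy]
    exact (tendsto_mk'_mulVec_of_diagonal hA hβ hγ hv0).apply_of_tendsto_prod hw
  · have himage : ∀ n, (dualGL (A n) : Matrix (Fin 3) (Fin 3) ℝ) *ᵥ h n =
        (β n)⁻¹ • (t n • ![0, 0, 1] + ![β n * f 0, f 1, 0]) := fun n => by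
      rw [dualGL_val_of_val_eq_diagonal (hA n)]
      ext j
      have hβn := (hβ0 n).ne'
      have hγn := (hγ0 n).ne'
      fin_cases j <;> simp [h, mulVec_diagonal] <;> field_simp
    simp only [himage, RP2.mk'_smul (inv_ne_zero (hβ0 _).ne')]
    rw [hyg]
    convert hlim using 3
    exact hgZE.symm

lemma mem_dynSet_of_plane_eq_e3
    (hA : ∀ n, (A n : Matrix (Fin 3) (Fin 3) ℝ) = Matrix.diagonal ![1, β n, γ n])
    (hβ0 : ∀ n, 0 < β n) (hγ0 : ∀ n, γ n ≠ 0) (hβ : Tendsto β atTop (𝓝 0))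
    (hγ : Tendsto γ atTop (𝓝 0)) (hratio : Tendsto (fun n => γ n / β n) atTop (𝓝 0))
    (hx : (x : RP2 × RP2) = (RP2.mk v hv, RP2.mk f hf)) (hv0 : v 0 = 0) (hf2 : f 2 ≠ 0)
    (hy : (y : RP2 × RP2).2 = RP2.mk ![0, 0, 1] e3_ne) :
    y ∈ DynSet (fun n => flagMap (A n)) x := by
  obtain ⟨p, hp, hyp⟩ := RP2.exists_eq_mk (y : RP2 × RP2).1
  have hfv := dotProduct_eq_zero_of_flag_eq_mk hx
  have hp2 : p 2 = 0 := by simpa [dotProduct, Fin.sum_univ_three] using y.2 p _ hp e3_ne hyp hy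
  have hv1 : v 1 ≠ 0 := by
    intro hv1
    have hv2 : v 2 = 0 := by
      simpa [dotProduct, Fin.sum_univ_three, hv0, hv1, hf2] using hfv
    exact hv (by ext j; fin_cases j <;> assumption)
  have hz : Tendsto (fun n => ![0, v 1, γ n / β n * v 2]) atTop (𝓝 ![0, v 1, 0]) := by
    have hratio' : Tendsto (fun n => γ n / β n * v 2) atTop (𝓝 0) := by
      simpa using hratio.mul_const (v 2)
    refine tendsto_pi_nhds.2 fun j => ?_
    fin_cases j <;> simp [hratio']
  have hpZE : (p 1 / v 1) • ![0, v 1, 0] + p 0 • ![1, 0, 0] = p := by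
    ext j; fin_cases j <;> simp [hp2, hv1]
  obtain ⟨t, ht, hlim⟩ := exists_tendsto_mk'_smul_add hβ0 hβ hz ![1, 0, 0] (hpZE ▸ hp)
  set w : ℕ → V3 := fun n => ![β n * t n, v 1, v 2]
  have hw : Tendsto w atTop (𝓝 v) := by
    refine tendsto_pi_nhds.2 fun j => ?_
    fin_cases j <;> simp [w, hv0, ht]
  obtain ⟨h, hh, hhw⟩ := exists_tendsto_dotProduct_eq_zero hw hv hfv
  refine mem_dynSet_flagMap_of_tendsto hx hw hh hhw ?_ ?_
  · have himage : ∀ n, (A n : Matrix (Fin 3) (Fin 3) ℝ) *ᵥ w n =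
        β n • (t n • ![1, 0, 0] + ![0, v 1, γ n / β n * v 2]) := fun n => by
      rw [hA n]
      have hβn := (hβ0 n).ne'
      ext j
      fin_cases j <;> simp [w, mulVec_diagonal]
      field_simp
    simp only [himage, RP2.mk'_smul (hβ0 _).ne']
    rw [hyp]
    convert hlim using 3
    exact hpZE.symm
  · rw [hy]
    exact (tendsto_mk'_dualGL_mulVec_of_diagonal hA hγ0 hγ hratio hf2).apply_of_tendsto_prod hh

end Balanced

/-- Lemma 2.15, claims 1–3 (balanced dynamics on the flag space, repulsive part,
diagonal case). -/
theorem balanced_flag_dynamics_repulsive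
    (β γ : ℕ → ℝ) (hpos : ∀ n, 0 < γ n ∧ γ n ≤ β n ∧ β n ≤ 1)
    (hβ : Filter.Tendsto β Filter.atTop (nhds 0))
    (hratio : Filter.Tendsto (fun n => γ n / β n) Filter.atTop (nhds 0))
    (A : ℕ → GL3)
    (hA : ∀ n, (A n : Matrix (Fin 3) (Fin 3) ℝ) = Matrix.diagonal ![1, β n, γ n])
    (v f : V3) (hv : v ≠ 0) (hf : f ≠ 0)
    (x : Flag3) (hx : (x : RP2 × RP2) = (RP2.mk v hv, RP2.mk f hf)) :
    (v 0 ≠ 0 → f 2 ≠ 0 →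
      DynSet (fun n => flagMap (A n)) x =
        {y : Flag3 | (y : RP2 × RP2) = (RP2.mk ![1, 0, 0] e1_ne, RP2.mk ![0, 0, 1] e3_ne)}) ∧
    (f 2 = 0 → v 0 ≠ 0 →
      DynSet (fun n => flagMap (A n)) x =
        {y : Flag3 | (y : RP2 × RP2).1 = RP2.mk ![1, 0, 0] e1_ne}) ∧
    (v 0 = 0 → f 2 ≠ 0 →
      DynSet (fun n => flagMap (A n)) x =
        {y : Flag3 | (y : RP2 × RP2).2 = RP2.mk ![0, 0, 1] e3_ne}) := by
  have hγ0 : ∀ n, 0 < γ n := fun n => (hpos n).1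
  have hβ0 : ∀ n, 0 < β n := fun n => (hpos n).1.trans_le (hpos n).2.1
  have hγ : Tendsto γ atTop (𝓝 0) := by
    simpa using (hratio.mul hβ).congr fun n => div_mul_cancel₀ _ (hβ0 n).ne'
  have hγne : ∀ n, γ n ≠ 0 := fun n => (hγ0 n).ne'
  refine ⟨fun hv0 hf2 => ?_, fun hf2 hv0 => ?_, fun hv0 hf2 => ?_⟩ <;> ext y
  · refine ⟨fun hy => Prod.ext ?_ ?_, mem_dynSet_of_eq_e1_e3 hA hγne hβ hγ hratio hx hv0 hf2⟩
    exacts [point_eq_e1_of_mem_dynSet hA hβ hγ hx hv0 hy,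
      plane_eq_e3_of_mem_dynSet hA hγne hγ hratio hx hf2 hy]
  · exact ⟨point_eq_e1_of_mem_dynSet hA hβ hγ hx hv0,
      mem_dynSet_of_point_eq_e1 hA hβ0 hγ0 hβ hγ hratio hx hv0 hf2⟩
  · exact ⟨plane_eq_e3_of_mem_dynSet hA hγne hγ hratio hx hf2,
      mem_dynSet_of_plane_eq_e3 hA hβ0 hγne hβ hγ hratio hx hv0 hf2⟩
end
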